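/- For a prime p and a finite group G, p does not divide the order of G if and only if the map ℤ/pℤ → 0 has the left lifting property with respect to the map G → 0. -/

import Mathlib

/-- Quillen lifting property: `f ⧄ g`. -/
def Lifts {A B X Y : Type*} [Group A] [Group B] [Group X] [Group Y]
    (f : A →* B) (g : X →* Y) : Prop :=
  ∀ (i : A →* X) (j : B →* Y), g.comp i = j.comp f →
    ∃ h : B →* X, h.comp f = i ∧ g.comp h = j

/-! Since both codomains are trivial, the lifting property says exactly that every homomorphism
`ℤ/pℤ → G` is trivial, i.e. that `G` has no element of order `p`. By Lagrange and Cauchy this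
happens iff `p ∤ |G|`. -/

theorem lifts_one_one_iff {A B X Y : Type*} [Group A] [Group B] [Group X] [Group Y]
    [Subsingleton B] [Subsingleton Y] :
    Lifts (1 : A →* B) (1 : X →* Y) ↔ ∀ i : A →* X, i = 1 := by
  constructor
  · intro hlift i
    obtain ⟨h, hf, -⟩ := hlift i 1 (MonoidHom.ext fun _ => Subsingleton.elim _ _)
    rw [← hf, MonoidHom.comp_one]
  · rintro htriv i j -
    exact ⟨1, by rw [MonoidHom.one_comp, htriv i], MonoidHom.ext fun _ => Subsingleton.elim _ _⟩

theorem MonoidHom.eq_one_of_coprime_card {H G : Type*} [Group H] [Group G] (f : H →* G)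
    (hcop : (Nat.card H).Coprime (Nat.card G)) : f = 1 :=
  MonoidHom.ext fun x => orderOf_eq_one_iff.mp <| Nat.eq_one_of_dvd_coprimes hcop
    ((orderOf_map_dvd f x).trans (orderOf_dvd_natCard x)) (orderOf_dvd_natCard (f x))

theorem exists_injective_monoidHom_zmod_of_prime_dvd_card {G : Type*} [Group G] [Finite G]
    {p : ℕ} [Fact p.Prime] (hdvd : p ∣ Nat.card G) :
    ∃ f : Multiplicative (ZMod p) →* G, Function.Injective f := by
  obtain ⟨g, hg⟩ := exists_prime_orderOf_dvd_card' p hdvd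
  have hcard : Nat.card (Multiplicative (ZMod p)) = Nat.card (Subgroup.zpowers g) := by
    rw [Nat.card_zpowers, hg, Nat.card_congr Multiplicative.toAdd, Nat.card_zmod]
  let e := mulEquivOfCyclicCardEq hcard
  exact ⟨(Subgroup.zpowers g).subtype.comp e.toMonoidHom,
    Subtype.val_injective.comp e.injective⟩

theorem forall_monoidHom_zmod_eq_one_iff {G : Type*} [Group G] [Finite G] {p : ℕ}
    (hp : p.Prime) :
    (∀ f : Multiplicative (ZMod p) →* G, f = 1) ↔ ¬ p ∣ Nat.card G := by
  have : Fact p.Prime := ⟨hp⟩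
  constructor
  · intro htriv hdvd
    obtain ⟨f, hf⟩ := exists_injective_monoidHom_zmod_of_prime_dvd_card hdvd
    obtain ⟨x, hx⟩ := exists_ne (1 : Multiplicative (ZMod p))
    exact hx (hf (by rw [htriv f, map_one, MonoidHom.one_apply]))
  · intro hndvd f
    refine f.eq_one_of_coprime_card ?_
    rwa [Nat.card_congr Multiplicative.toAdd, Nat.card_zmod, hp.coprime_iff_not_dvd]

theorem stmt8 {G : Type*} [Group G] [Finite G] (p : ℕ) (hp : p.Prime) :
    ¬ p ∣ Nat.card G ↔
      Lifts (1 : Multiplicative (ZMod p) →* PUnit) (1 : G →* PUnit) := by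
  rw [lifts_one_one_iff, forall_monoidHom_zmod_eq_one_iff hp]
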